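/- arXiv:1403.5684 — 5 statements merged into one kernel-verified Lean document; each statement's English description precedes it below -/
import Mathlib

section
/- For k₀ = 2, the functions μ(r) = −ln r and ν(r) = ln(rc − 1) − ln r (with c > 0, r > 1/c) satisfy the two Einstein field equations: k₀μ′² + (1+k₀)μ′ν′ + (μ′+ν′)/r − (k₀/2)(ν″ + ν′² + μ″) = 0 and k₀(2−k₀)μ′² − k₀μ″ + (2/r)(1−k₀)μ′ − (ν″ + ν′²) + 2μ′ν′ = 0. -/
private lemma dmu : deriv (fun r : ℝ => -Real.log r) = fun r : ℝ => -r⁻¹ := by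
  funext x
  rw [deriv.fun_neg, Real.deriv_log]

private lemma hasDerivNu {c x : ℝ} (hc : 0 < c) (hx : 1/c < x) :
    HasDerivAt (fun r : ℝ => Real.log (r * c - 1) - Real.log r)
      (c / (x * c - 1) - x⁻¹) x := by
  have hx0 : 0 < x := lt_trans (by positivity) hx
  have hxc : 0 < x * c - 1 := by
    have := (div_lt_iff₀ hc).mp hx
    linarith
  have h1 : HasDerivAt (fun r : ℝ => r * c - 1) c x := by
    simpa using ((hasDerivAt_id x).mul_const c).sub_const 1
  have h2 : HasDerivAt (fun r : ℝ => Real.log (r * c - 1)) ((x * c - 1)⁻¹ * c) x :=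
    by have := (Real.hasDerivAt_log (ne_of_gt hxc)).comp x h1; exact this
  have h3 : HasDerivAt Real.log x⁻¹ x := Real.hasDerivAt_log (ne_of_gt hx0)
  have := h2.fun_sub h3
  simpa [div_eq_inv_mul] using this

private lemma dnu {c : ℝ} (hc : 0 < c) :
    Set.EqOn (deriv (fun r : ℝ => Real.log (r * c - 1) - Real.log r))
      (fun x : ℝ => c / (x * c - 1) - x⁻¹) {x : ℝ | 1/c < x} := by
  intro x hx
  exact (hasDerivNu hc hx).deriv

theorem k0_eq_two_solution (c : ℝ) (hc : 0 < c)
    (μ ν : ℝ → ℝ)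
    (hμ : μ = fun r => -Real.log r)
    (hν : ν = fun r => Real.log (r * c - 1) - Real.log r)
    (k₀ : ℝ) (hk₀ : k₀ = 2) :
    ∀ r : ℝ, 1/c < r →
      (k₀ * (deriv μ r)^2 + (1 + k₀) * deriv μ r * deriv ν r
        + (deriv μ r + deriv ν r) / r
        - (k₀/2) * (deriv (deriv ν) r + (deriv ν r)^2 + deriv (deriv μ) r) = 0)
      ∧
      (k₀ * (2 - k₀) * (deriv μ r)^2 - k₀ * deriv (deriv μ) r
        + (2/r) * (1 - k₀) * deriv μ r
        - (deriv (deriv ν) r + (deriv ν r)^2) + 2 * deriv μ r * deriv ν r = 0) := by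
  subst hμ hν hk₀
  intro r hr
  have hr0 : 0 < r := lt_trans (by positivity) hr
  have hrc : 0 < r * c - 1 := by
    have := (div_lt_iff₀ hc).mp hr
    linarith
  -- first derivatives
  have hμ1 : deriv (fun r : ℝ => -Real.log r) r = -r⁻¹ := by rw [dmu]
  have hν1 : deriv (fun r : ℝ => Real.log (r * c - 1) - Real.log r) r
      = c / (r * c - 1) - r⁻¹ := dnu hc hr
  -- second derivative of μ
  have hμ2 : deriv (deriv (fun r : ℝ => -Real.log r)) r = (r^2)⁻¹ := by
    rw [dmu]
    have : HasDerivAt (fun x : ℝ => -x⁻¹) ((r^2)⁻¹) r := by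
      simpa using (hasDerivAt_inv (ne_of_gt hr0)).fun_neg
    exact this.deriv
  -- second derivative of ν
  have hν2 : deriv (deriv (fun r : ℝ => Real.log (r * c - 1) - Real.log r)) r
      = -(c^2 / (r * c - 1)^2) + (r^2)⁻¹ := by
    have heq : deriv (fun r : ℝ => Real.log (r * c - 1) - Real.log r)
        =ᶠ[nhds r] (fun x : ℝ => c / (x * c - 1) - x⁻¹) := by
      have hopen : IsOpen {x : ℝ | 1/c < x} := isOpen_lt continuous_const continuous_id
      exact Filter.eventuallyEq_of_mem (hopen.mem_nhds hr) (dnu hc)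
    rw [heq.deriv_eq]
    have h1 : HasDerivAt (fun x : ℝ => x * c - 1) c r := by
      simpa using ((hasDerivAt_id r).mul_const c).sub_const 1
    have h2 : HasDerivAt (fun x : ℝ => (x * c - 1)⁻¹)
        (-((r * c - 1)^2)⁻¹ * c) r :=
      (hasDerivAt_inv (ne_of_gt hrc)).comp r h1
    have h3 : HasDerivAt (fun x : ℝ => c / (x * c - 1))
        (c * (-((r * c - 1)^2)⁻¹ * c)) r := by
      simpa [div_eq_mul_inv] using h2.const_mul c
    have h4 : HasDerivAt (fun x : ℝ => x⁻¹) (-(r^2)⁻¹) r :=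
      hasDerivAt_inv (ne_of_gt hr0)
    have := h3.fun_sub h4
    rw [this.deriv]
    field_simp
    ring
  rw [hμ1, hν1, hμ2, hν2]
  constructor <;> · field_simp; ring
end

section
/- For k₀ = 2, consider the explicit solution μ = −ln r, ν = ln(−1+rc) − ln r (c > 0, r > 1/c); then the energy density ρ = −(μ″+ψ″+ψ′²)e^{−2μ} with ψ = 2μ + ln r evaluates to a nonpositive function, so the weak energy condition fails. -/
lemma neg_log_deriv : deriv (fun r : ℝ => -Real.log r) = fun x => -x⁻¹ := by
  funext x
  rw [deriv.fun_neg, Real.deriv_log]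

lemma neg_inv_deriv {r : ℝ} (hr : r ≠ 0) :
    deriv (fun x : ℝ => -x⁻¹) r = (r ^ 2)⁻¹ := by
  rw [deriv.fun_neg, deriv_inv]
  simp

theorem k0_eq_two_negative_density (c : ℝ) (hc : 0 < c)
    (μ ν ψ ρ : ℝ → ℝ)
    (hμ : μ = fun r => -Real.log r)
    (hν : ν = fun r => Real.log (r * c - 1) - Real.log r)
    (hψ : ψ = fun r => 2 * μ r + Real.log r)
    (hρ : ρ = fun r =>
      -(deriv (deriv μ) r + deriv (deriv ψ) r + (deriv ψ r)^2)
        * Real.exp (-2 * μ r)) :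
    ∀ r : ℝ, 1/c < r → ρ r ≤ 0 := by
  intro r hr
  have hrpos : 0 < r := lt_trans (by positivity) hr
  have hψ' : ψ = fun r => -Real.log r := by
    subst hμ; funext x; simp [hψ]; ring
  subst hρ hψ' hμ
  simp only [neg_log_deriv, neg_inv_deriv hrpos.ne']
  have h1 : (0:ℝ) ≤ (r ^ 2)⁻¹ + (r ^ 2)⁻¹ + (-r⁻¹) ^ 2 := by positivity
  have h2 : (0:ℝ) < Real.exp (-2 * -Real.log r) := Real.exp_pos _
  nlinarith [mul_pos (lt_of_lt_of_le h2 (le_refl _)) h2]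
end

section
/- Let k₀ = 1 and suppose M, N satisfy 2μ′ν′ + 2μ′ψ′ − ν′² − ν″ − ψ″ − ψ′² = 0 and equation (eq2) with ψ = μ + ln r, M = μ′, N = ν′. Then N = (−M²r − 2M)/(2 + 2Mr) wherever 2 + 2Mr ≠ 0. -/
theorem k0_eq_one_N_from_M
    (μ ν ψ : ℝ → ℝ) (r : ℝ) (hr : 0 < r)
    (hψ : ψ = fun s => μ s + Real.log s)
    (M N : ℝ)
    (hM : M = deriv μ r) (hN : N = deriv ν r)
    (hψ1 : deriv ψ r = deriv μ r + 1/r)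
    (hψ2 : deriv (deriv ψ) r = deriv (deriv μ) r - 1/r^2)
    (heqA : 2 * deriv μ r * deriv ν r + 2 * deriv μ r * deriv ψ r
      - (deriv ν r)^2 - deriv (deriv ν) r - deriv (deriv ψ) r
      - (deriv ψ r)^2 = 0)
    (heq2 : deriv μ r * deriv ν r + deriv μ r * deriv ψ r
      + deriv ν r * deriv ψ r
      = (1/2) * ((deriv ν r)^2 + deriv (deriv ν) r + deriv (deriv μ) r))
    (hden : 2 + 2 * M * r ≠ 0) :
    N = (-M^2 * r - 2 * M) / (2 + 2 * M * r) := by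
  have hr' : r ≠ 0 := ne_of_gt hr
  rw [hψ1, hψ2] at heqA
  rw [hψ1] at heq2
  rw [eq_div_iff hden]
  subst hM hN
  field_simp at heqA heq2
  have h4 : (r:ℝ)^4 ≠ 0 := pow_ne_zero _ hr'
  refine mul_right_cancel₀ h4 ?_
  linear_combination r^4 * heq2 - r^3 * heqA
end

section
/- For the k₀ = 1 solution with the plus sign, M(r) = (3c + √(3c²+6cr³))/((r³−c)r), c > 0, the limit as r → 0⁺ of r·μ′(r) = r·M(r) equals −3 − √3; in particular it is nonzero, so the elementary flatness (axis regularity) condition lim_{r→0} e^{2(k₀−1)μ}(1 + k₀ r μ′)² = 1 fails. -/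
theorem axis_limit_plus (c : ℝ) (hc : 0 < c)
    (M : ℝ → ℝ)
    (hM : M = fun r => (3*c + Real.sqrt (3*c^2 + 6*c*r^3)) / ((r^3 - c) * r)) :
    Filter.Tendsto (fun r => r * M r) (nhdsWithin 0 (Set.Ioi 0))
      (nhds (-3 - Real.sqrt 3))
    ∧ (-3 - Real.sqrt 3 : ℝ) ≠ 0 := by
  constructor
  · have hcont : ContinuousAt (fun r : ℝ =>
        (3*c + Real.sqrt (3*c^2 + 6*c*r^3)) / (r^3 - c)) 0 := by
      apply ContinuousAt.div
      · exact (continuousAt_const.add ((continuous_const.add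
          (continuous_const.mul (continuous_pow 3))).continuousAt.sqrt))
      · fun_prop
      · simp [hc.ne']
    have hval : (3*c + Real.sqrt (3*c^2 + 6*c*(0:ℝ)^3)) / ((0:ℝ)^3 - c)
        = -3 - Real.sqrt 3 := by
      have h1 : Real.sqrt (3*c^2 + 6*c*(0:ℝ)^3) = Real.sqrt 3 * c := by
        rw [show 3*c^2 + 6*c*(0:ℝ)^3 = 3 * c^2 by ring,
          Real.sqrt_mul (by norm_num), Real.sqrt_sq hc.le]
      rw [h1, div_eq_iff (by simp [hc.ne'] : ((0:ℝ)^3 - c) ≠ 0)]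
      ring
    have htend : Filter.Tendsto (fun r : ℝ =>
        (3*c + Real.sqrt (3*c^2 + 6*c*r^3)) / (r^3 - c))
        (nhdsWithin 0 (Set.Ioi 0)) (nhds (-3 - Real.sqrt 3)) := by
      have := hcont.tendsto
      rw [hval] at this
      exact this.mono_left nhdsWithin_le_nhds
    refine htend.congr' ?_
    filter_upwards [self_mem_nhdsWithin] with r hr
    have hr0 : r ≠ 0 := ne_of_gt hr
    rw [hM]
    field_simp
  · have h : Real.sqrt 3 ≥ 0 := Real.sqrt_nonneg 3
    nlinarith
end

section
/- Let 1 < k₀ < 2, r > 0, M > 0, N > 0, and define Z = ((k₀²−2k₀+2)M² + 2MN/k₀ + 2M(k₀²−k₀+1)/(rk₀) + 2N/(rk₀))/(k₀−1). Then ρ := Z(k₀+1) − 2k₀M/r − k₀²M² ≥ 0. -/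
theorem energy_density_nonneg (k₀ r M N Z : ℝ)
    (hk₁ : 1 < k₀) (hk₂ : k₀ < 2) (hr : 0 < r) (hM : 0 < M) (hN : 0 < N)
    (hZ : Z = ((k₀^2 - 2*k₀ + 2)*M^2 + 2*M*N/k₀
      + 2*M*(k₀^2 - k₀ + 1)/(r*k₀) + 2*N/(r*k₀)) / (k₀ - 1)) :
    0 ≤ Z*(k₀ + 1) - 2*k₀*M/r - k₀^2*M^2 := by
  have hk0 : (0:ℝ) < k₀ := by linarith
  have hk1 : (0:ℝ) < k₀ - 1 := by linarith
  subst hZ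
  have key : (((k₀^2 - 2*k₀ + 2)*M^2 + 2*M*N/k₀
      + 2*M*(k₀^2 - k₀ + 1)/(r*k₀) + 2*N/(r*k₀)) / (k₀ - 1)) * (k₀ + 1)
      - 2*k₀*M/r - k₀^2*M^2
      = (2*M^2*r*k₀ + 2*M*N*r*(k₀+1) + 2*M*(k₀^2+1) + 2*N*(k₀+1))
        / (r * k₀ * (k₀ - 1)) := by
    field_simp
    ring
  rw [key]
  positivity
end
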